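/- arXiv:1011.3860 — 4 statements merged into one kernel-verified Lean document; each statement's English description precedes it below -/
import Mathlib

section
/- Y_n equals the set Z of all points p ∈ P_n satisfying the following condition: for every pair of nonempty subsets I ⊆ J ⊆ [n], if [a_i^I]_{i∈I} and [a_j^J]_{j∈J} denote the I- and J-components of p, then the vectors (a_i^I)_{i∈I} and (a_i^J)_{i∈I} of ℂ^I are linearly dependent (this condition is independent of the choice of homogeneous representatives). In particular Z is closed in P_n and contains ρ(T_n). -/
noncomputable section

open Projectivization

instance projTopology {K V : Type*} [DivisionRing K] [AddCommGroup V] [Module K V]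
    [TopologicalSpace V] : TopologicalSpace (Projectivization K V) :=
  inferInstanceAs (TopologicalSpace (Quotient (projectivizationSetoid K V)))

/-- The index type of nonempty subsets of `ι`. -/
abbrev NES (ι : Type) := {I : Set ι // I.Nonempty}

/-- The ambient product `P = ∏_{∅ ≠ I ⊆ ι} ℙ^I` of projective spaces. -/
abbrev PSp (ι : Type) := (I : NES ι) → Projectivization ℂ (↥I.1 → ℂ)

/-- The subset of `ℙ^ι` consisting of points all of whose homogeneous coordinates
are nonzero (an algebraic torus). -/
def torusSet (ι : Type) : Set (Projectivization ℂ (ι → ℂ)) := {x | ∀ i, x.rep i ≠ 0}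

open Classical in
/-- The `i`-th homogeneous coordinate (for the chosen representative `rep`) of the
`K`-component of a point `p ∈ P`; junk value `0` if `i ∉ K` or `K = ∅`. -/
def pcoord (ι : Type) (p : PSp ι) (K : Set ι) (i : ι) : ℂ :=
  if h : K.Nonempty ∧ i ∈ K then (p ⟨K, h.1⟩).rep ⟨i, h.2⟩ else 0

lemma pcoord_exists_ne (ι : Type) (p : PSp ι) (K : Set ι) (hK : K.Nonempty) :
    ∃ i, i ∈ K ∧ pcoord ι p K i ≠ 0 := by
  obtain ⟨x, hx⟩ := Function.ne_iff.mp (Projectivization.rep_nonzero (p ⟨K, hK⟩))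
  refine ⟨x.1, x.2, ?_⟩
  rw [pcoord, dif_pos ⟨hK, x.2⟩]
  simpa using hx

/-- The map `ρ` from the torus to `P`, whose `I`-component is given by restricting
the homogeneous coordinates. -/
def rho (ι : Type) (x : ↥(torusSet ι)) : PSp ι := fun I =>
  Projectivization.mk ℂ (fun i : ↥I.1 => x.1.rep i.1) <| by
    obtain ⟨i, hi⟩ := I.2
    intro h0
    exact x.2 i (by simpa using congrFun h0 ⟨i, hi⟩)

/-- `Y`, the closure of `ρ(T)` in `P`. -/
def Yn (ι : Type) : Set (PSp ι) := closure (Set.range (rho ι))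

/-- The chain of a point `p ∈ P`: `chainK ι p 0 = univ` (this is `K₁` in the paper)
and `chainK ι p (ℓ+1)` (i.e. `K_{ℓ+2}`) consists of those `k ∈ chainK ι p ℓ` for which the
`k`-th homogeneous coordinate of the `chainK ι p ℓ`-component of `p` vanishes. -/
def chainK (ι : Type) (p : PSp ι) : ℕ → Set ι
  | 0 => Set.univ
  | ℓ + 1 => {k ∈ chainK ι p ℓ | pcoord ι p (chainK ι p ℓ) k = 0}

/-- A chain of subsets `ι = K 0 ⊋ K 1 ⊋ ⋯ ⊋ K m = ∅` (written `K₁ ⊋ ⋯ ⊋ K_{m+1}` in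
the paper); we extend it by `∅` beyond the `m`-th step so that it is determined by
the function `K`. -/
structure SubsetChain (ι : Type) where
  m : ℕ
  K : ℕ → Set ι
  first : K 0 = Set.univ
  strict : ∀ ℓ < m, K (ℓ + 1) ⊂ K ℓ
  last : K m = ∅
  beyond : ∀ ℓ, m ≤ ℓ → K ℓ = ∅

/-- The piece `O_{K₁,…,K_{m+1}}` of `Y`: those points of `Y` whose chain is the given one. -/
def Ochain (ι : Type) (c : SubsetChain ι) : Set (PSp ι) :=
  {p ∈ Yn ι | ∀ ℓ ≤ c.m, chainK ι p ℓ = c.K ℓ}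

/-- The subset `D_{K₁,…,K_{m+1}}` of `Y`: the points whose `K_ℓ`-component has vanishing
coordinates indexed by `K_{ℓ+1}`. -/
def Dchain (ι : Type) (c : SubsetChain ι) : Set (PSp ι) :=
  {p ∈ Yn ι | ∀ ℓ < c.m, ∀ k ∈ c.K (ℓ + 1), pcoord ι p (c.K ℓ) k = 0}

/-- The action of an element of the torus on a point of `P`:
`[a]·([b_i]_{i ∈ I})_I = ([a_i b_i]_{i ∈ I})_I`. -/
def act (ι : Type) (t : ↥(torusSet ι)) (p : PSp ι) : PSp ι := fun I =>
  Projectivization.mk ℂ (fun i : ↥I.1 => t.1.rep i.1 * (p I).rep i) <| by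
    intro h0
    obtain ⟨i, hi⟩ := Function.ne_iff.mp (Projectivization.rep_nonzero (p I))
    have h : t.1.rep i.1 * (p I).rep i = 0 := by simpa using congrFun h0 i
    exact mul_ne_zero (t.2 i.1) (by simpa using hi) h

/-- The action of a permutation `w` of `ι` on `P`: the `w(I)`-component of `w·p` is
`[a^I_{w⁻¹(j)}]_{j ∈ w(I)}`; equivalently the `J`-component of `w·p` is
`[a^{w⁻¹(J)}_{w⁻¹(j)}]_{j ∈ J}`. -/
def permAct (ι : Type) (w : Equiv.Perm ι) (p : PSp ι) : PSp ι := fun J =>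
  Projectivization.mk ℂ (fun j : ↥J.1 => pcoord ι p (⇑(w⁻¹) '' J.1) (w⁻¹ j.1)) <| by
    have hK : ((⇑(w⁻¹) : ι → ι) '' J.1).Nonempty := J.2.image _
    obtain ⟨i, hi, hne⟩ := pcoord_exists_ne ι p _ hK
    obtain ⟨j, hj, hji⟩ := hi
    intro h0
    apply hne
    have h := congrFun h0 ⟨j, hj⟩
    simpa [hji] using h

/-- The set `Z` of points of `P` all of whose pairs of nested components are compatible:
for `∅ ≠ I ⊆ J ⊆ [n]`, the vectors `(a^I_i)_{i ∈ I}` and `(a^J_i)_{i ∈ I}` are linearly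
dependent. -/
def Zset (n : ℕ) : Set (PSp (Fin n)) :=
  {p | ∀ I J : Set (Fin n), I.Nonempty → I ⊆ J →
    ∃ c d : ℂ, ¬(c = 0 ∧ d = 0) ∧
      ∀ i ∈ I, c * pcoord (Fin n) p I i + d * pcoord (Fin n) p J i = 0}

/-!
The minors `a^I_i a^J_j - a^I_j a^J_i` vanish on `ρ(T)` and are homogeneous in each factor, so
they cut out a closed set, which is `Z`; hence `Y ⊆ Z`.

Conversely, a point `p ∈ Z` determines a chain `[n] = K₀ ⊋ K₁ ⊋ ⋯ ⊋ ∅`, where `K_{ℓ+1}` is the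
zero set in `K_ℓ` of the `K_ℓ`-component of `p`. Let `ℓ(i)` be the level of `i`
(`i ∈ K_{ℓ(i)} \ K_{ℓ(i)+1}`) and `a_i ≠ 0` its coordinate in the `K_{ℓ(i)}`-component. The torus
points `[ε^{ℓ(i)} a_i]_i` converge to `p` as `ε → 0`: on a component `I`, the lowest power of `ε`
occurring picks out the `K_ℓ`-component with `ℓ = min_{i ∈ I} ℓ(i)`, and since `I ⊆ K_ℓ` the
minors identify it with the `I`-component of `p`.
-/

open Filter Topology

namespace Projectivization

section Topology

variable {K V : Type*} [DivisionRing K] [AddCommGroup V] [Module K V] [TopologicalSpace V]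

theorem isOpenQuotientMap_mk' [ContinuousConstSMul K V] :
    IsOpenQuotientMap (mk' K : {v : V // v ≠ 0} → Projectivization K V) := by
  refine ⟨fun x => ⟨⟨x.rep, x.rep_nonzero⟩, x.mk_rep⟩, continuous_quot_mk, fun U hU => ?_⟩
  have hsat : mk' K ⁻¹' (mk' K '' U) =
      ⋃ c : Kˣ, (fun x : {v : V // v ≠ 0} => (⟨c • x.1, (smul_ne_zero_iff_ne c).2 x.2⟩ :
        {v : V // v ≠ 0})) ⁻¹' U := by
    ext x
    simp only [Set.mem_preimage, Set.mem_image, Set.mem_iUnion]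
    constructor
    · rintro ⟨y, hyU, hy⟩
      obtain ⟨c, hc⟩ := (mk_eq_mk_iff K _ _ y.2 x.2).1 hy
      exact ⟨c, by simpa only [hc] using hyU⟩
    · rintro ⟨c, hc⟩
      exact ⟨_, hc, (mk_eq_mk_iff K _ _ _ x.2).2 ⟨c, rfl⟩⟩
  change IsOpen (mk' K ⁻¹' (mk' K '' U))
  rw [hsat]
  exact isOpen_iUnion fun c =>
    hU.preimage (((continuous_const_smul c).comp continuous_subtype_val).subtype_mk _)

theorem tendsto_mk {α : Type*} {l : Filter α} {f : α → V} {v : V} (hf : ∀ a, f a ≠ 0)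
    (hv : v ≠ 0) (h : Tendsto f l (𝓝 v)) :
    Tendsto (fun a => mk K (f a) (hf a)) l (𝓝 (mk K v hv)) :=
  (continuous_quot_mk.tendsto _).comp (tendsto_subtype_rng.2 h)

theorem isClosed_setOf_rep_mem {κ : Type*} {V : κ → Type*} [∀ k, AddCommGroup (V k)]
    [∀ k, Module K (V k)] [∀ k, TopologicalSpace (V k)] [∀ k, ContinuousConstSMul K (V k)]
    {C : Set ((k : κ) → V k)} (hC : IsClosed C)
    (hsmul : ∀ (a : κ → Kˣ) (v : (k : κ) → V k), v ∈ C → (fun k => a k • v k) ∈ C) :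
    IsClosed {p : (k : κ) → Projectivization K (V k) | (fun k => (p k).rep) ∈ C} := by
  have hπ := IsOpenQuotientMap.piMap fun k => isOpenQuotientMap_mk' (K := K) (V := V k)
  rw [← hπ.isQuotientMap.isClosed_preimage]
  have hpre : Pi.map (fun k => mk' K) ⁻¹' {p : (k : κ) → Projectivization K (V k) |
      (fun k => (p k).rep) ∈ C} = (fun v k => (v k).1) ⁻¹' C := by
    ext v
    choose a ha using fun k => exists_smul_eq_mk_rep K (v k).1 (v k).2
    have hrep : (fun k => (mk' K (v k)).rep) = fun k => a k • (v k).1 := funext fun k => (ha k).symm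
    simp only [Set.mem_preimage, Set.mem_ofPred_eq, Pi.map_apply, hrep]
    refine ⟨fun h => ?_, hsmul a _⟩
    simpa using hsmul (fun k => (a k)⁻¹) _ h
  rw [hpre]
  exact hC.preimage (continuous_pi fun k => continuous_subtype_val.comp (continuous_apply k))

end Topology

theorem tendsto_mk_pow_mul {K α β : Type*} [Field K] [TopologicalSpace K] [ContinuousMul K]
    {l : Filter β} {ε : β → K} (hε : Tendsto ε l (𝓝 0)) {e : α → ℕ} {a : α → K} {m : ℕ}
    (hm : ∀ i, m ≤ e i) (h : ∀ b, (fun i => ε b ^ e i * a i) ≠ 0) {w : α → K} (hw : w ≠ 0)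
    (hlim : ∀ i, w i = 0 ^ (e i - m) * a i) :
    Tendsto (fun b => mk K (fun i => ε b ^ e i * a i) (h b)) l (𝓝 (mk K w hw)) := by
  have hv : ∀ b, (fun i => ε b ^ (e i - m) * a i) ≠ 0 := fun b hb =>
    h b (funext fun i => by
      rw [Pi.zero_apply, ← pow_mul_pow_sub _ (hm i), mul_assoc, congrFun hb i, Pi.zero_apply,
        mul_zero])
  have hscale : ∀ b, mk K (fun i => ε b ^ e i * a i) (h b) =
      mk K (fun i => ε b ^ (e i - m) * a i) (hv b) :=
    fun b => (mk_eq_mk_iff' K _ _ _ _).2 ⟨ε b ^ m, funext fun i => by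
      simp [← pow_mul_pow_sub _ (hm i), mul_assoc]⟩
  simp only [hscale]
  refine tendsto_mk hv hw (tendsto_pi_nhds.2 fun i => ?_)
  rw [hlim i]
  exact (((continuous_pow _).tendsto 0).comp hε).mul_const (a i)

end Projectivization

theorem exists_combination_eq_zero_iff_mul_eq_mul {ι K : Type*} [Field K] {s : Set ι}
    {u w : ι → K} (hu : ∃ i ∈ s, u i ≠ 0) :
    (∃ c d : K, ¬(c = 0 ∧ d = 0) ∧ ∀ i ∈ s, c * u i + d * w i = 0) ↔
      ∀ i ∈ s, ∀ j ∈ s, u i * w j = u j * w i := by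
  constructor
  · rintro ⟨c, d, hcd, h⟩ i hi j hj
    by_cases hc : c = 0
    · have hw : ∀ k ∈ s, w k = 0 := fun k hk => by
        simpa [hc, (show d ≠ 0 from fun hd => hcd ⟨hc, hd⟩)] using h k hk
      rw [hw i hi, hw j hj, mul_zero, mul_zero]
    · apply mul_left_cancel₀ hc
      linear_combination w j * h i hi - w i * h j hj
  · intro h
    obtain ⟨k, hk, hne⟩ := hu
    refine ⟨w k, -u k, fun h0 => hne (neg_eq_zero.1 h0.2), fun i hi => ?_⟩
    linear_combination h i hi k hk

section Coordinates

variable {ι : Type}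

theorem pcoord_of_mem (p : PSp ι) {K : Set ι} (hK : K.Nonempty) {i : ι} (hi : i ∈ K) :
    pcoord ι p K i = (p ⟨K, hK⟩).rep ⟨i, hi⟩ :=
  dif_pos ⟨hK, hi⟩

theorem mk_mem_torusSet {v : ι → ℂ} (hv : ∀ i, v i ≠ 0) (h0 : v ≠ 0) :
    mk ℂ v h0 ∈ torusSet ι := fun i => by
  obtain ⟨c, hc⟩ := exists_smul_eq_mk_rep ℂ v h0
  rw [← hc, Units.smul_def, Pi.smul_apply, smul_eq_mul]
  exact mul_ne_zero c.ne_zero (hv i)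

theorem rho_mk {v : ι → ℂ} {h0 : v ≠ 0} (hT : mk ℂ v h0 ∈ torusSet ι) (I : NES ι)
    (hI : (fun i : I.1 => v i) ≠ 0) :
    rho ι ⟨mk ℂ v h0, hT⟩ I = mk ℂ (fun i : I.1 => v i) hI := by
  obtain ⟨c, hc⟩ := exists_smul_eq_mk_rep ℂ v h0
  refine (mk_eq_mk_iff' ℂ _ _ _ _).2 ⟨c, funext fun i => ?_⟩
  simp [← hc, Units.smul_def]

theorem exists_pcoord_rho_eq_mul (x : torusSet ι) {I : Set ι} (hI : I.Nonempty) :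
    ∃ c : ℂˣ, ∀ i ∈ I, pcoord ι (rho ι x) I i = c * x.1.rep i := by
  have hv : (fun i : I => x.1.rep i) ≠ 0 := fun h =>
    x.2 _ (congrFun h ⟨hI.some, hI.some_mem⟩)
  obtain ⟨c, hc⟩ := exists_smul_eq_mk_rep ℂ _ hv
  refine ⟨c, fun i hi => ?_⟩
  rw [pcoord_of_mem _ hI hi]
  exact (congrFun hc ⟨i, hi⟩).symm

end Coordinates

section Chain

variable {ι : Type} (p : PSp ι)

theorem chainK_succ_subset (ℓ : ℕ) : chainK ι p (ℓ + 1) ⊆ chainK ι p ℓ := fun _ h => h.1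

theorem chainK_antitone : Antitone (chainK ι p) :=
  antitone_nat_of_succ_le (chainK_succ_subset p)

theorem chainK_succ_ssubset {ℓ : ℕ} (h : (chainK ι p ℓ).Nonempty) :
    chainK ι p (ℓ + 1) ⊂ chainK ι p ℓ := by
  obtain ⟨i, hi, hne⟩ := pcoord_exists_ne ι p _ h
  exact Set.ssubset_iff_subset_ne.2 ⟨chainK_succ_subset p ℓ, fun heq => hne (heq ▸ hi).2⟩

theorem exists_notMem_chainK_succ [Finite ι] (i : ι) : ∃ ℓ, i ∉ chainK ι p (ℓ + 1) := by
  by_contra! h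
  have hanti : StrictAnti (chainK ι p) :=
    strictAnti_nat_of_succ_lt fun ℓ => chainK_succ_ssubset p ⟨i, chainK_succ_subset p ℓ (h ℓ)⟩
  exact not_injective_infinite_finite _ hanti.injective

open Classical in
def chainLevel [Finite ι] (i : ι) : ℕ := Nat.find (exists_notMem_chainK_succ p i)

variable [Finite ι] {p}

theorem mem_chainK_iff_le_chainLevel {i : ι} {ℓ : ℕ} :
    i ∈ chainK ι p ℓ ↔ ℓ ≤ chainLevel p i := by
  classical
  constructor
  · intro hi
    by_contra! hlt
    exact Nat.find_spec (exists_notMem_chainK_succ p i) (chainK_antitone p hlt hi)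
  · intro hle
    cases ℓ with
    | zero => trivial
    | succ m => exact not_not.1 (Nat.find_min (exists_notMem_chainK_succ p i) hle)

theorem pcoord_chainK_chainLevel_ne_zero (i : ι) :
    pcoord ι p (chainK ι p (chainLevel p i)) i ≠ 0 := fun h0 => by
  have hsucc : i ∈ chainK ι p (chainLevel p i + 1) :=
    ⟨mem_chainK_iff_le_chainLevel.2 le_rfl, h0⟩
  exact Nat.not_succ_le_self _ (mem_chainK_iff_le_chainLevel.1 hsucc)

/-- Below the level of `i` the coordinate vanishes, since `i` survives into `chainK ι p (ℓ + 1)`. -/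
theorem pcoord_chainK_of_le {i : ι} {ℓ : ℕ} (h : ℓ ≤ chainLevel p i) :
    pcoord ι p (chainK ι p ℓ) i =
      0 ^ (chainLevel p i - ℓ) * pcoord ι p (chainK ι p (chainLevel p i)) i := by
  rcases h.eq_or_lt with rfl | hlt
  · simp
  · rw [zero_pow (Nat.sub_ne_zero_of_lt hlt), zero_mul]
    exact (mem_chainK_iff_le_chainLevel.2 (Nat.succ_le_of_lt hlt)).2

end Chain

section Compatibility

variable {n : ℕ}

theorem mem_zset_iff (p : PSp (Fin n)) : p ∈ Zset n ↔
    ∀ I J : Set (Fin n), I.Nonempty → I ⊆ J → ∀ i ∈ I, ∀ j ∈ I,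
      pcoord (Fin n) p I i * pcoord (Fin n) p J j = pcoord (Fin n) p I j * pcoord (Fin n) p J i :=
  forall₄_congr fun I _ hI _ =>
    exists_combination_eq_zero_iff_mul_eq_mul (pcoord_exists_ne (Fin n) p I hI)

theorem range_rho_subset_zset (n : ℕ) : Set.range (rho (Fin n)) ⊆ Zset n := by
  rintro _ ⟨x, rfl⟩
  refine (mem_zset_iff _).2 fun I J hI hIJ i hi j hj => ?_
  obtain ⟨c, hc⟩ := exists_pcoord_rho_eq_mul x hI
  obtain ⟨d, hd⟩ := exists_pcoord_rho_eq_mul x (hI.mono hIJ)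
  rw [hc i hi, hc j hj, hd i (hIJ hi), hd j (hIJ hj)]
  ring

theorem isClosed_zset (n : ℕ) : IsClosed (Zset n) := by
  let C : Set ((I : NES (Fin n)) → I.1 → ℂ) := {v | ∀ (I J : Set (Fin n)) (hI : I.Nonempty)
    (hIJ : I ⊆ J) (i : Fin n) (hi : i ∈ I) (j : Fin n) (hj : j ∈ I),
      v ⟨I, hI⟩ ⟨i, hi⟩ * v ⟨J, hI.mono hIJ⟩ ⟨j, hIJ hj⟩ =
        v ⟨I, hI⟩ ⟨j, hj⟩ * v ⟨J, hI.mono hIJ⟩ ⟨i, hIJ hi⟩}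
  have hZ : Zset n = {p | (fun I => (p I).rep) ∈ C} := by
    ext p
    rw [mem_zset_iff]
    refine forall₄_congr fun I J hI hIJ => forall₂_congr fun i hi => forall₂_congr fun j hj => ?_
    rw [pcoord_of_mem p hI hi, pcoord_of_mem p hI hj, pcoord_of_mem p (hI.mono hIJ) (hIJ hi),
      pcoord_of_mem p (hI.mono hIJ) (hIJ hj)]
  rw [hZ]
  refine isClosed_setOf_rep_mem ?_ fun a v hv I J hI hIJ i hi j hj => ?_
  · simp only [C, Set.ofPred_forall]
    refine isClosed_iInter fun I => isClosed_iInter fun J => isClosed_iInter fun hI =>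
      isClosed_iInter fun hIJ => isClosed_iInter fun i => isClosed_iInter fun hi =>
      isClosed_iInter fun j => isClosed_iInter fun hj => isClosed_eq ?_ ?_ <;> fun_prop
  · simp only [Units.smul_def, Pi.smul_apply, smul_eq_mul]
    linear_combination (a ⟨I, hI⟩ * a ⟨J, hI.mono hIJ⟩ : ℂ) * hv I J hI hIJ i hi j hj

theorem apply_eq_mk_pcoord_of_mem_zset {p : PSp (Fin n)} (hp : p ∈ Zset n) {I J : Set (Fin n)}
    (hI : I.Nonempty) (hIJ : I ⊆ J) (hw : (fun i : I => pcoord (Fin n) p J i) ≠ 0) :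
    p ⟨I, hI⟩ = mk ℂ (fun i : I => pcoord (Fin n) p J i) hw := by
  obtain ⟨⟨k, hk⟩, hne⟩ := Function.ne_iff.1 hw
  replace hne : pcoord (Fin n) p J k ≠ 0 := hne
  rw [← mk_rep (p ⟨I, hI⟩), mk_eq_mk_iff']
  refine ⟨pcoord (Fin n) p I k / pcoord (Fin n) p J k, funext fun ⟨i, hi⟩ => ?_⟩
  have hmin := (mem_zset_iff p).1 hp I J hI hIJ i hi k hk
  rw [Pi.smul_apply, smul_eq_mul, ← pcoord_of_mem p hI hi, div_mul_eq_mul_div, div_eq_iff hne]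
  exact hmin.symm

end Compatibility

theorem zset_subset_yn {n : ℕ} (hn : 1 ≤ n) : Zset n ⊆ Yn (Fin n) := by
  intro p hp
  set a : Fin n → ℂ := fun i => pcoord (Fin n) p (chainK (Fin n) p (chainLevel p i)) i
  have ha : ∀ i, a i ≠ 0 := pcoord_chainK_chainLevel_ne_zero
  set ε : ℕ → ℂ := fun k => 1 / ((k : ℂ) + 1)
  have hε : Tendsto ε atTop (𝓝 0) := tendsto_one_div_add_atTop_nhds_zero_nat
  have hx : ∀ k i, ε k ^ chainLevel p i * a i ≠ 0 := fun k i =>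
    mul_ne_zero (pow_ne_zero _ (one_div_ne_zero (Nat.cast_add_one_ne_zero k))) (ha i)
  have hx0 : ∀ k, (fun i => ε k ^ chainLevel p i * a i) ≠ 0 := fun k h =>
    hx k ⟨0, hn⟩ (congrFun h _)
  refine mem_closure_of_tendsto (b := atTop)
    (f := fun k => rho (Fin n) ⟨_, mk_mem_torusSet (hx k) (hx0 k)⟩)
    (tendsto_pi_nhds.2 fun ⟨I, hI⟩ => ?_) (.of_forall fun k => Set.mem_range_self _)
  obtain ⟨i₀, hi₀, hmin⟩ := Set.exists_min_image I (chainLevel p) I.toFinite hI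
  set ℓ := chainLevel p i₀
  have hIK : I ⊆ chainK (Fin n) p ℓ := fun i hi => mem_chainK_iff_le_chainLevel.2 (hmin i hi)
  have hw : (fun i : I => pcoord (Fin n) p (chainK (Fin n) p ℓ) i) ≠ 0 := fun h =>
    ha i₀ (congrFun h ⟨i₀, hi₀⟩)
  have hxI : ∀ k, (fun i : I => ε k ^ chainLevel p i * a i) ≠ 0 := fun k h =>
    hx k i₀ (congrFun h ⟨i₀, hi₀⟩)
  rw [apply_eq_mk_pcoord_of_mem_zset hp hI hIK hw]
  exact (tendsto_mk_pow_mul hε (fun i : I => hmin i.1 i.2) hxI hw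
    fun i => pcoord_chainK_of_le (hmin i.1 i.2)).congr fun k =>
      (rho_mk (mk_mem_torusSet (hx k) (hx0 k)) ⟨I, hI⟩ (hxI k)).symm

/-- Proposition 2.4 (Proposition `equationprop`): `Y_n` equals the set `Z` of points
satisfying the linear-dependence conditions; in particular `Z` is closed in `P_n` and
contains `ρ(T_n)`. -/
theorem stmt0 (n : ℕ) (hn : 1 ≤ n) :
    Yn (Fin n) = Zset n ∧ IsClosed (Zset n) ∧ Set.range (rho (Fin n)) ⊆ Zset n :=
  ⟨(closure_minimal (range_rho_subset_zset n) (isClosed_zset n)).antisymm (zset_subset_yn hn),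
    isClosed_zset n, range_rho_subset_zset n⟩
end
end

section
/- The map ρ is a homeomorphism from T_n onto its image ρ(T_n); the image ρ(T_n) is an open (and dense) subset of Y_n; the T_n-action on Y_n preserves ρ(T_n) and is simply transitive on it; and ρ(T_n) equals O_{[n],∅}, the set of points of Y_n whose chain is [n] ⊋ ∅. -/
noncomputable section

open Projectivization

/-! A point of `ρ(T)` has a `[n]`-component without zero coordinates, and restricting to that
component gives a continuous left inverse of `ρ`; the action of `T` on `ρ(T)` is coordinatewise
multiplication of homogeneous coordinates, which is simply transitive. Conversely, the closed
conditions `a^{[n]}_i a^I_j = a^{[n]}_j a^I_i` hold on `ρ(T)`, hence on `Y`; when `p_{[n]}` has no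
zero coordinate they force every component `p_I` to be the restriction of `p_{[n]}`, so that
`p = ρ(p_{[n]})`. Thus `ρ(T) = Y ∩ {p | p_{[n]} has no zero coordinate}`, which is open in `Y`
and is the set of points whose chain is `[n] ⊋ ∅`. -/

open Topology
open scoped LinearAlgebra.Projectivization

namespace Projectivization

section Topology

variable {K V W : Type*} [DivisionRing K] [AddCommGroup V] [Module K V] [TopologicalSpace V]
  [AddCommGroup W] [Module K W] [TopologicalSpace W]

theorem isQuotientMap_mk' : IsQuotientMap (mk' K : {v : V // v ≠ 0} → ℙ K V) :=
  isQuotientMap_quotient_mk'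

theorem continuous_mk' : Continuous (mk' K : {v : V // v ≠ 0} → ℙ K V) :=
  isQuotientMap_mk'.continuous

theorem isOpenMap_mk' [ContinuousConstSMul K V] :
    IsOpenMap (mk' K : {v : V // v ≠ 0} → ℙ K V) := by
  intro U hU
  rw [← isQuotientMap_mk'.isOpen_preimage]
  have hsat : mk' K ⁻¹' (mk' K '' U) =
      ⋃ a : Kˣ, (fun v : {v : V // v ≠ 0} => (⟨a • v.1, smul_ne_zero a.ne_zero v.2⟩ :
        {v : V // v ≠ 0})) ⁻¹' U := by
    ext v
    simp only [Set.mem_preimage, Set.mem_image, Set.mem_iUnion, mk'_eq_mk]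
    constructor
    · rintro ⟨w, hw, hwv⟩
      obtain ⟨a, ha⟩ := (mk_eq_mk_iff K _ _ _ _).1 hwv
      exact ⟨a, by simpa [ha] using hw⟩
    · rintro ⟨a, ha⟩
      exact ⟨_, ha, (mk_eq_mk_iff K _ _ _ _).2 ⟨a, rfl⟩⟩
  rw [hsat]
  exact isOpen_iUnion fun a =>
    hU.preimage ((continuous_subtype_val.const_smul (a : K)).subtype_mk _)

theorem continuous_map {f : V →ₗ[K] W} (hf : Function.Injective f) (hc : Continuous f) :
    Continuous (map f hf) :=
  isQuotientMap_mk'.continuous_iff.2 <|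
    continuous_mk'.comp ((hc.comp continuous_subtype_val).subtype_mk _)

theorem continuous_mk_apply_rep {U : Set (ℙ K V)} (hU : IsOpen U) {f : V →ₗ[K] W}
    (hc : Continuous f) (hf : ∀ x ∈ U, f x.rep ≠ 0) :
    Continuous fun x : U => mk K (f x.1.rep) (hf x.1 x.2) := by
  rw [(isQuotientMap_mk'.restrictPreimage_isOpen hU).continuous_iff]
  have hfv : ∀ v : mk' K ⁻¹' U, f v.1.1 ≠ 0 := fun v h => by
    obtain ⟨a, ha⟩ := exists_smul_eq_mk_rep K v.1.1 v.1.2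
    exact hf _ v.2 (by rw [mk'_eq_mk, ← ha, Units.smul_def, map_smul, h, smul_zero])
  have hcomp : (fun x : U => mk K (f x.1.rep) (hf x.1 x.2)) ∘ U.restrictPreimage (mk' K) =
      mk' K ∘ fun v => ⟨f v.1.1, hfv v⟩ := by
    funext v
    obtain ⟨a, ha⟩ := exists_smul_eq_mk_rep K v.1.1 v.1.2
    refine (mk_eq_mk_iff K _ _ _ _).2 ⟨a, ?_⟩
    simp [← ha, Units.smul_def]
  rw [hcomp]
  exact continuous_mk'.comp
    ((hc.comp (continuous_subtype_val.comp continuous_subtype_val)).subtype_mk _)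

end Topology

section Coordinates

variable {K σ τ : Type*} [Field K]

theorem preimage_mk'_setOf_rep {P : (σ → K) → Prop} (hP : ∀ (a : Kˣ) v, P (a • v) ↔ P v) :
    mk' K ⁻¹' {x : ℙ K (σ → K) | P x.rep} = {v | P v.1} := by
  ext v
  obtain ⟨a, ha⟩ := exists_smul_eq_mk_rep K v.1 v.2
  simp only [Set.mem_preimage, Set.mem_ofPred_eq, mk'_eq_mk, ← ha, hP]

theorem isOpen_setOf_forall_rep_ne_zero [TopologicalSpace K] [T1Space K] [ContinuousMul K]
    [Finite σ] : IsOpen {x : ℙ K (σ → K) | ∀ i, x.rep i ≠ 0} := by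
  rw [← isQuotientMap_mk'.isOpen_preimage,
    preimage_mk'_setOf_rep (P := fun v => ∀ i, v i ≠ 0) fun a v => by
      simp [Units.smul_def, a.ne_zero], Set.ofPred_forall]
  exact isOpen_iInter_of_finite fun i =>
    isOpen_compl_singleton.preimage ((continuous_apply i).comp continuous_subtype_val)

theorem isClosed_setOf_rep_mul_rep_eq [TopologicalSpace K] [T2Space K] [ContinuousMul K]
    (a b : σ) (c d : τ) :
    IsClosed {xy : ℙ K (σ → K) × ℙ K (τ → K) |
      xy.1.rep a * xy.2.rep d = xy.1.rep b * xy.2.rep c} := by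
  have hq : IsQuotientMap
      (Prod.map (mk' K : {v : σ → K // v ≠ 0} → _) (mk' K : {w : τ → K // w ≠ 0} → _)) :=
    (isOpenMap_mk'.prodMap isOpenMap_mk').isQuotientMap (continuous_mk'.prodMap continuous_mk')
      (isQuotientMap_mk'.surjective.prodMap isQuotientMap_mk'.surjective)
  rw [← hq.isClosed_preimage]
  have hpre : Prod.map (mk' K) (mk' K) ⁻¹' {xy : ℙ K (σ → K) × ℙ K (τ → K) |
      xy.1.rep a * xy.2.rep d = xy.1.rep b * xy.2.rep c} =
      {vw | vw.1.1 a * vw.2.1 d = vw.1.1 b * vw.2.1 c} := by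
    ext ⟨v, w⟩
    obtain ⟨s, hs⟩ := exists_smul_eq_mk_rep K v.1 v.2
    obtain ⟨t, ht⟩ := exists_smul_eq_mk_rep K w.1 w.2
    have hst : (s * t : K) ≠ 0 := mul_ne_zero s.ne_zero t.ne_zero
    simp only [Set.mem_preimage, Set.mem_ofPred_eq, Prod.map, mk'_eq_mk, ← hs, ← ht,
      Pi.smul_apply, Units.smul_def, smul_eq_mul]
    constructor
    · exact fun h => mul_left_cancel₀ hst (by linear_combination h)
    · exact fun h => by linear_combination (s * t : K) * h
  have hv (i : σ) : Continuous fun vw : {v : σ → K // v ≠ 0} × {w : τ → K // w ≠ 0} => vw.1.1 i :=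
    (continuous_apply i).comp (continuous_subtype_val.comp continuous_fst)
  have hw (j : τ) : Continuous fun vw : {v : σ → K // v ≠ 0} × {w : τ → K // w ≠ 0} => vw.2.1 j :=
    (continuous_apply j).comp (continuous_subtype_val.comp continuous_snd)
  rw [hpre]
  exact isClosed_eq ((hv a).mul (hw d)) ((hv b).mul (hw c))

end Coordinates

end Projectivization

open Projectivization

variable {ι : Type}

def univNES (ι : Type) [Nonempty ι] : NES ι := ⟨Set.univ, Set.univ_nonempty⟩

theorem isOpen_torusSet [Finite ι] : IsOpen (torusSet ι) :=
  isOpen_setOf_forall_rep_ne_zero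

theorem ne_zero_of_forall_ne_zero {M : Type*} [Zero M] [Nonempty ι] {v : ι → M}
    (hv : ∀ i, v i ≠ 0) : v ≠ 0 :=
  fun h => hv (Classical.arbitrary ι) (congrFun h _)

def torusMk [Nonempty ι] (v : ι → ℂ) (hv : ∀ i, v i ≠ 0) : torusSet ι :=
  ⟨mk ℂ v (ne_zero_of_forall_ne_zero hv), fun i => by
    obtain ⟨a, ha⟩ := exists_smul_eq_mk_rep ℂ v (ne_zero_of_forall_ne_zero hv)
    simp [← ha, Units.smul_def, a.ne_zero, hv i]⟩

theorem torusMk_rep [Nonempty ι] (x : torusSet ι) : torusMk x.1.rep x.2 = x :=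
  Subtype.ext x.1.mk_rep

theorem torusMk_eq_torusMk_iff [Nonempty ι] {v w : ι → ℂ} (hv : ∀ i, v i ≠ 0)
    (hw : ∀ i, w i ≠ 0) : torusMk v hv = torusMk w hw ↔ ∃ a : ℂ, a • w = v :=
  Subtype.ext_iff.trans (mk_eq_mk_iff' ℂ _ _ _ _)

theorem exists_rho_rep_eq_smul (x : torusSet ι) (I : NES ι) :
    ∃ a : ℂˣ, (rho ι x I).rep = a • fun i : I.1 => x.1.rep i :=
  ⟨_, (exists_smul_eq_mk_rep ℂ _ _).choose_spec.symm⟩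

theorem rho_torusMk [Nonempty ι] (v : ι → ℂ) (hv : ∀ i, v i ≠ 0) (I : NES ι) :
    rho ι (torusMk v hv) I =
      mk ℂ (fun i : I.1 => v i) fun h => hv _ (congrFun h ⟨_, I.2.some_mem⟩) := by
  obtain ⟨a, ha⟩ := exists_smul_eq_mk_rep ℂ v (ne_zero_of_forall_ne_zero hv)
  refine (mk_eq_mk_iff ℂ _ _ _ _).2 ⟨a, funext fun i => ?_⟩
  simp [torusMk, ← ha]

theorem act_rho [Nonempty ι] (t x : torusSet ι) :
    act ι t (rho ι x) =
      rho ι (torusMk (t.1.rep * x.1.rep) fun i => mul_ne_zero (t.2 i) (x.2 i)) := by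
  funext I
  rw [rho_torusMk]
  obtain ⟨b, hb⟩ := exists_rho_rep_eq_smul x I
  refine (mk_eq_mk_iff ℂ _ _ _ _).2 ⟨b, funext fun i => ?_⟩
  simp only [hb, Pi.smul_apply, Pi.mul_apply, Units.smul_def, smul_eq_mul]
  ring

theorem exists_act_rho_eq_rho [Nonempty ι] (t x : torusSet ι) :
    ∃ y, act ι t (rho ι x) = rho ι y :=
  ⟨_, act_rho t x⟩

abbrev univEquiv (ι : Type) : (↥(Set.univ : Set ι) → ℂ) ≃ₗ[ℂ] (ι → ℂ) :=
  LinearEquiv.funCongrLeft ℂ ℂ (Equiv.Set.univ ι).symm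

theorem map_rho_univNES [Nonempty ι] (x : torusSet ι) :
    map (univEquiv ι).toLinearMap (univEquiv ι).injective (rho ι x (univNES ι)) = x.1 :=
  (map_mk _ _ _ _).trans x.1.mk_rep

theorem rho_injective [Nonempty ι] : Function.Injective (rho ι) := fun x y h =>
  Subtype.ext (by rw [← map_rho_univNES x, ← map_rho_univNES y, h])

theorem continuous_rho [Finite ι] : Continuous (rho ι) :=
  continuous_pi fun I =>
    continuous_mk_apply_rep isOpen_torusSet (f := LinearMap.funLeft ℂ ℂ (Subtype.val : I.1 → ι))
      (continuous_pi fun i => continuous_apply i.1)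
      fun _ hx h => hx _ (congrFun h ⟨_, I.2.some_mem⟩)

theorem isEmbedding_rho [Finite ι] [Nonempty ι] : IsEmbedding (rho ι) := by
  refine IsEmbedding.of_comp continuous_rho
    ((continuous_map (univEquiv ι).injective (continuous_pi fun i => continuous_apply _)).comp
      (continuous_apply (univNES ι))) ?_
  rw [show _ ∘ rho ι = Subtype.val from funext map_rho_univNES]
  exact IsEmbedding.subtypeVal

theorem act_rho_injective [Nonempty ι] {t t' x : torusSet ι}
    (h : act ι t (rho ι x) = act ι t' (rho ι x)) : t = t' := by
  rw [act_rho, act_rho] at h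
  obtain ⟨a, ha⟩ := (torusMk_eq_torusMk_iff _ _).1 (rho_injective h)
  refine (torusMk_rep t).symm.trans
    (((torusMk_eq_torusMk_iff _ _).2 ⟨a, funext fun i => ?_⟩).trans (torusMk_rep t'))
  have hi := congrFun ha i
  simp only [Pi.smul_apply, Pi.mul_apply, smul_eq_mul] at hi ⊢
  exact mul_right_cancel₀ (x.2 i) (by rw [← hi]; ring)

theorem existsUnique_act_rho_eq_rho [Nonempty ι] (x y : torusSet ι) :
    ∃! t, act ι t (rho ι x) = rho ι y := by
  have hq : ∀ i, y.1.rep i / x.1.rep i ≠ 0 := fun i => div_ne_zero (y.2 i) (x.2 i)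
  obtain ⟨c, hc⟩ := exists_smul_eq_mk_rep ℂ _ (ne_zero_of_forall_ne_zero hq)
  have h₀ : act ι (torusMk _ hq) (rho ι x) = rho ι y := by
    rw [act_rho]
    refine congrArg (rho ι) (((torusMk_eq_torusMk_iff _ _).2 ⟨c, funext fun i => ?_⟩).trans
      (torusMk_rep y))
    simp only [torusMk, ← hc, Pi.smul_apply, Pi.mul_apply, Units.smul_def, smul_eq_mul]
    field_simp [x.2 i]
  exact ⟨_, h₀, fun t ht => act_rho_injective (ht.trans h₀.symm)⟩

theorem rep_mul_rep_eq_of_mem_Yn [Nonempty ι] {p : PSp ι} (hp : p ∈ Yn ι) (I : NES ι) {i j : ι}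
    (hi : i ∈ I.1) (hj : j ∈ I.1) :
    (p (univNES ι)).rep ⟨i, trivial⟩ * (p I).rep ⟨j, hj⟩ =
      (p (univNES ι)).rep ⟨j, trivial⟩ * (p I).rep ⟨i, hi⟩ := by
  refine closure_minimal ?_ ((isClosed_setOf_rep_mul_rep_eq _ _ ⟨i, hi⟩ ⟨j, hj⟩).preimage
    ((continuous_apply (univNES ι)).prodMk (continuous_apply I))) hp
  rintro _ ⟨x, rfl⟩
  obtain ⟨a, ha⟩ := exists_rho_rep_eq_smul x (univNES ι)
  obtain ⟨b, hb⟩ := exists_rho_rep_eq_smul x I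
  simp only [Set.mem_preimage, Set.mem_ofPred_eq, ha, hb, Pi.smul_apply, Units.smul_def,
    smul_eq_mul]
  ring

theorem range_rho [Nonempty ι] :
    Set.range (rho ι) = Yn ι ∩ {p | p (univNES ι) ∈ torusSet (univNES ι).1} := by
  refine Set.Subset.antisymm ?_ ?_
  · rintro _ ⟨x, rfl⟩
    refine ⟨subset_closure ⟨x, rfl⟩, fun i => ?_⟩
    obtain ⟨a, ha⟩ := exists_rho_rep_eq_smul x (univNES ι)
    simp [ha, Units.smul_def, a.ne_zero, x.2 i]
  · rintro p ⟨hpY, hpT⟩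
    let u : ι → ℂ := fun i => (p (univNES ι)).rep ⟨i, trivial⟩
    refine ⟨torusMk u fun i => hpT _, funext fun I => ?_⟩
    obtain ⟨i₀, hi₀⟩ := I.2
    rw [rho_torusMk]
    conv_rhs => rw [← (p I).mk_rep]
    refine ((mk_eq_mk_iff' ℂ _ _ _ _).2 ⟨(p I).rep ⟨i₀, hi₀⟩ / u i₀, funext fun j => ?_⟩).symm
    have hu : u i₀ ≠ 0 := hpT _
    simp only [Pi.smul_apply, smul_eq_mul]
    field_simp
    linear_combination -rep_mul_rep_eq_of_mem_Yn hpY I hi₀ j.2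

theorem chainK_one_eq_empty_iff [Nonempty ι] (p : PSp ι) :
    chainK ι p 1 = ∅ ↔ p (univNES ι) ∈ torusSet (univNES ι).1 := by
  simp only [chainK, Set.mem_univ, pcoord, Set.univ_nonempty, and_self, ↓reduceDIte, true_and,
    Set.eq_empty_iff_forall_notMem, Set.mem_ofPred_eq, univNES, torusSet, ne_eq, Subtype.forall,
    forall_true_left]
  exact Iff.rfl

theorem isOpen_preimage_val_range_rho [Finite ι] [Nonempty ι] :
    IsOpen (Subtype.val ⁻¹' Set.range (rho ι) : Set (Yn ι)) := by
  rw [range_rho, Subtype.preimage_coe_self_inter]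
  exact (isOpen_torusSet.preimage (continuous_apply (univNES ι))).preimage continuous_subtype_val

/-- `ρ` is a homeomorphism from `T_n` onto its image; the image `ρ(T_n)` is an open and
dense subset of `Y_n`; the torus action preserves `ρ(T_n)` and is simply transitive on
it; and `ρ(T_n) = O_{[n],∅}` is the set of points of `Y_n` whose chain is `[n] ⊋ ∅`. -/
theorem stmt9 (n : ℕ) (hn : 1 ≤ n) :
    Topology.IsEmbedding (rho (Fin n)) ∧
    IsOpen (Subtype.val ⁻¹' Set.range (rho (Fin n)) : Set ↥(Yn (Fin n))) ∧
    Set.range (rho (Fin n)) ⊆ Yn (Fin n) ∧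
    closure (Set.range (rho (Fin n))) = Yn (Fin n) ∧
    (∀ (t : ↥(torusSet (Fin n))) (x : ↥(torusSet (Fin n))),
      ∃ y : ↥(torusSet (Fin n)), act (Fin n) t (rho (Fin n) x) = rho (Fin n) y) ∧
    (∀ x y : ↥(torusSet (Fin n)),
      ∃! t : ↥(torusSet (Fin n)), act (Fin n) t (rho (Fin n) x) = rho (Fin n) y) ∧
    Set.range (rho (Fin n)) = {p ∈ Yn (Fin n) | chainK (Fin n) p 1 = ∅} := by
  have : Nonempty (Fin n) := ⟨⟨0, hn⟩⟩
  refine ⟨isEmbedding_rho, isOpen_preimage_val_range_rho, subset_closure, rfl,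
    exists_act_rho_eq_rho, existsUnique_act_rho_eq_rho, ?_⟩
  ext p
  simp only [range_rho, chainK_one_eq_empty_iff]
  rfl
end
end

section
/- For every integer i ≥ 1, the secant number A_{2i} satisfies A_{2i} = Σ_{m=1}^{i} (−1)^{i+m} Σ (2i)!/(n_1!·n_2!·⋯·n_m!), where the inner sum is over all ordered tuples (n_1,…,n_m) of even integers with each n_j ≥ 2 and n_1 + n_2 + ⋯ + n_m = 2i. (This is the dimension count underlying the expression of the cohomology H^i of the real type A Coxeter toric variety as a signed sum of induced sign representations.) -/
/-!
Write `cos X = 1 - D`, where `X² ∣ D`. Inverting, `sec X = ∑ₘ Dᵐ`, and since `Dᵐ` starts in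
degree `2m` only the terms `m ≤ i` reach `X^{2i}`. The coefficient of `X^{2i}` in `Dᵐ` is a sum
over compositions `n₁ + ⋯ + nₘ = 2i`; only even parts `nⱼ ≥ 2` contribute, each with
`-(-1)^(nⱼ/2) / nⱼ!`, so the signs multiply to `(-1)^(i+m)`.
-/

open PowerSeries Finset Nat
open scoped PowerSeries

namespace PowerSeries

variable {R : Type*}

theorem coeff_pow_eq_sum_antidiagonalTuple [CommSemiring R] (m n : ℕ) (F : R⟦X⟧) :
    coeff n (F ^ m) = ∑ f ∈ Nat.antidiagonalTuple m n, ∏ j, coeff (f j) F := by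
  rw [← Fin.prod_const, coeff_prod]
  refine sum_nbij' (fun l => ⇑l) (fun f => Finsupp.equivFunOnFinite.symm f) ?_ ?_ ?_ ?_ ?_
  · intro l hl
    simp only [mem_finsuppAntidiag] at hl
    simp [Nat.mem_antidiagonalTuple, ← hl.1]
  · intro f hf
    simp only [Nat.mem_antidiagonalTuple] at hf
    simp [mem_finsuppAntidiag, ← hf]
  · intro l _; exact Finsupp.equivFunOnFinite.symm_apply_apply l
  · intro f _; rfl
  · intro l _; simp

theorem coeff_pow_eq_sum_filter_antidiagonalTuple [CommSemiring R] {p : ℕ → Prop}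
    [DecidablePred p] {F : R⟦X⟧} (hF : ∀ k, ¬ p k → coeff k F = 0) (m n : ℕ) :
    coeff n (F ^ m) =
      ∑ f ∈ Nat.antidiagonalTuple m n with ∀ j, p (f j), ∏ j, coeff (f j) F := by
  rw [coeff_pow_eq_sum_antidiagonalTuple, sum_filter_of_ne]
  intro f _ hf j
  by_contra hj
  exact hf (prod_eq_zero (mem_univ j) (hF _ hj))

theorem coeff_eq_sum_coeff_pow_of_one_sub_mul_eq_one [CommRing R] {D S : R⟦X⟧} {k N n : ℕ}
    (hD : X ^ k ∣ D) (hS : (1 - D) * S = 1) (hn : n < k * (N + 1)) :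
    coeff n S = ∑ m ∈ range (N + 1), coeff n (D ^ m) := by
  have hexpand : S = ∑ m ∈ range (N + 1), D ^ m + D ^ (N + 1) * S :=
    calc S = ((∑ m ∈ range (N + 1), D ^ m) * (1 - D) + D ^ (N + 1)) * S := by
          rw [geom_sum_mul_neg]; ring
      _ = _ := by rw [add_mul, mul_assoc, hS, mul_one]
  have htail : coeff n (D ^ (N + 1) * S) = 0 := by
    refine X_pow_dvd_iff.mp ?_ n hn
    rw [pow_mul]
    exact dvd_mul_of_dvd_left (pow_dvd_pow_of_dvd hD _) S
  rw [hexpand, map_add, htail, add_zero, map_sum]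

theorem coeff_one_sub_cos (n : ℕ) :
    coeff n (1 - cos ℚ) = if Even n ∧ 2 ≤ n then (-1) ^ (n / 2 + 1) / (n ! : ℚ) else 0 := by
  rcases n with _ | _ | n
  · simp [cos]
  · simp [cos]
  · simp only [map_sub, coeff_one, cos, coeff_mk, Algebra.algebraMap_self, RingHom.id_apply]
    split_ifs <;> first | omega | simp_all [pow_succ, neg_div]

theorem prod_coeff_one_sub_cos {m i : ℕ} {f : Fin m → ℕ} (hsum : ∑ j, f j = 2 * i)
    (hf : ∀ j, Even (f j) ∧ 2 ≤ f j) :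
    ∏ j, coeff (f j) (1 - cos ℚ) = (-1) ^ (i + m) / ∏ j, ((f j)! : ℚ) := by
  have hexp : ∑ j, (f j / 2 + 1) = i + m := by
    have : 2 * ∑ j, f j / 2 = ∑ j, f j := by
      rw [mul_sum]; exact sum_congr rfl fun j _ => Nat.two_mul_div_two_of_even (hf j).1
    simp only [sum_add_distrib, sum_const, Finset.card_univ, Fintype.card_fin, smul_eq_mul, mul_one]
    omega
  simp only [coeff_one_sub_cos, if_pos (hf _), prod_div_distrib, prod_pow_eq_pow_sum, hexp]

end PowerSeries

/-- The secant (Euler) numbers: `A i` denotes `A_{2i}`, the coefficient of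
`X^{2i}/(2i)!` in `sec X`, defined by the identity `cos X · sec X = 1` in `ℚ[[X]]`.
For `i ≥ 1`,
`A_{2i} = Σ_{m=1}^{i} (−1)^{i+m} Σ (2i)!/(n_1!⋯n_m!)`,
the inner sum being over ordered tuples `(n_1,…,n_m)` of even integers `n_j ≥ 2` with
`n_1 + ⋯ + n_m = 2i`. -/
theorem stmt10 (A : ℕ → ℚ)
    (hA : (PowerSeries.mk fun j => if Even j then ((-1 : ℚ)) ^ (j / 2) / (Nat.factorial j) else 0) *
          (PowerSeries.mk fun j => if Even j then A (j / 2) / (Nat.factorial j) else 0) = 1) :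
    ∀ i : ℕ, 1 ≤ i →
      A i = ∑ m ∈ Finset.Icc 1 i, (-1 : ℚ) ^ (i + m) *
        ∑ f ∈ (Finset.Nat.antidiagonalTuple m (2 * i)).filter
            (fun f => ∀ j, Even (f j) ∧ 2 ≤ f j),
          (Nat.factorial (2 * i) : ℚ) / ∏ j, (Nat.factorial (f j) : ℚ) := by
  intro i hi
  set S : ℚ⟦X⟧ := PowerSeries.mk fun j => if Even j then A (j / 2) / (Nat.factorial j) else 0
  -- `algebraMap ℚ ℚ` is the identity, so the first factor of `hA` is `cos ℚ` by definition.
  have hinv : (1 - (1 - cos ℚ)) * S = 1 := by rw [sub_sub_cancel, ← hA]; rfl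
  have hX2 : X ^ 2 ∣ 1 - cos ℚ :=
    X_pow_dvd_iff.mpr fun k hk => by interval_cases k <;> simp [coeff_one_sub_cos]
  have hS : coeff (2 * i) S = A i / (2 * i)! := by simp [S]
  have hsum := coeff_eq_sum_coeff_pow_of_one_sub_mul_eq_one (n := 2 * i) (N := i) hX2 hinv (by omega)
  rw [hS, range_eq_Ico, sum_eq_sum_Ico_succ_bot (by omega), pow_zero, coeff_one, if_neg (by omega),
    zero_add, Ico_add_one_right_eq_Icc, div_eq_iff (by positivity)] at hsum
  rw [hsum, sum_mul]
  refine sum_congr rfl fun m _ => ?_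
  rw [coeff_pow_eq_sum_filter_antidiagonalTuple (p := fun k => Even k ∧ 2 ≤ k) (fun k hk => by
    simp [coeff_one_sub_cos, hk]), sum_mul, mul_sum]
  refine sum_congr rfl fun f hf => ?_
  rw [mem_filter, Nat.mem_antidiagonalTuple] at hf
  rw [prod_coeff_one_sub_cos hf.1 hf.2]
  ring
end

section
/- In the formal power series ring ℚ[[X,T]] in two commuting variables X and T, the following identity holds: (Σ_{n≥0} Σ_{0≤i≤n/2} (−1)^i A_{2i} · binom(n,2i) · T^i · X^n/n!) · (Σ_{k≥0} T^k X^{2k}/(2k)!) = Σ_{n≥0} X^n/n!. (Equivalently, the two-variable exponential generating function Σ_{n,i} A_{2i} binom(n,2i) (−T)^i X^n/n! equals exp(X)·sech(T^{1/2} X); this encodes the Betti numbers dim H^i(T_n(ℝ),ℚ) = A_{2i} binom(n,2i) of the real toric variety of the type A Coxeter fan.) -/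
/-!
Write `s(T) = Σ (-1)^i A_{2i} T^i/(2i)!` and `c(T) = Σ T^k/(2k)!`, so that `s(X²) = sech X` and
`c(X²) = cosh X`; the hypothesis `cos X · sec X = 1` gives `s · c = 1` after `X² ↦ -T`. Since
`binom(n,2i)/n! = 1/((2i)! (n-2i)!)`, the first factor is `exp X · s(X²T)` and the second is
`c(X²T)`, so the product is `exp X · (s·c)(X²T) = exp X`.
-/

open PowerSeries Nat

namespace PowerSeries

variable {R : Type*} [CommRing R]

theorem expand_injective (p : ℕ) (hp : p ≠ 0) :
    Function.Injective (expand p hp : R⟦X⟧ → R⟦X⟧) := by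
  intro f g h
  ext m
  rw [← coeff_expand_mul p hp f, ← coeff_expand_mul p hp g, h]

theorem mk_ite_even_eq_expand (g : ℕ → R) :
    mk (fun j => if Even j then g j else 0) = expand 2 two_ne_zero (mk fun k => g (2 * k)) := by
  ext j
  simp only [coeff_expand, coeff_mk, ← even_iff_two_dvd]
  split_ifs with h
  · rw [Nat.two_mul_div_two_of_even h]
  · rfl

theorem mk_choose_div_factorial {K : Type*} [Field K] [Algebra ℚ K] (j : ℕ) :
    mk (fun n => (n.choose j : K) / n !) = C (1 / (j ! : K)) * X ^ j * exp K := by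
  have := algebraRat.charZero K
  ext n
  rw [mul_comm (C _), mul_assoc, coeff_X_pow_mul', coeff_mk]
  split_ifs with h
  · rw [coeff_C_mul, coeff_exp, Nat.cast_choose K h]
    simp only [map_div₀, map_one, map_natCast]
    have : (n ! : K) ≠ 0 := Nat.cast_ne_zero.mpr n.factorial_ne_zero
    field_simp
  · rw [Nat.choose_eq_zero_of_lt (by omega)]
    simp

end PowerSeries

theorem mk_neg_one_pow_mul_div_mul_mk_inv_factorial {K : Type*} [Field K] (A : ℕ → K)
    (hA : (mk fun j => if Even j then (-1 : K) ^ (j / 2) / j ! else 0) *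
      (mk fun j => if Even j then A (j / 2) / j ! else 0) = 1) :
    (mk fun i => (-1 : K) ^ i * A i / (2 * i)!) * (mk fun k => 1 / ((2 * k)! : K)) = 1 := by
  have hcos_mul_sec : (mk fun k => (-1 : K) ^ k / (2 * k)!) * (mk fun k => A k / (2 * k)!) = 1 := by
    rw [mk_ite_even_eq_expand, mk_ite_even_eq_expand, ← map_mul,
      ← map_one (expand 2 two_ne_zero)] at hA
    simpa only [Nat.mul_div_cancel_left _ two_pos] using expand_injective 2 two_ne_zero hA
  have h := congrArg (rescale (-1)) hcos_mul_sec
  rw [map_mul, map_one, mul_comm] at h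
  convert h using 2 <;> ext k <;> simp only [coeff_rescale, coeff_mk]
  · ring
  · rw [← mul_div_assoc, ← mul_pow]; simp

/-- In `ℚ[[X,T]]` (realized as `ℚ[[X]][[T]]`, the outer variable being `T`), with
`A i = A_{2i}` the secant numbers defined by `cos · sec = 1`, one has
`(Σ_{n,i} (−1)^i A_{2i} binom(n,2i) T^i X^n/n!) · (Σ_k T^k X^{2k}/(2k)!) = Σ_n X^n/n!`;
this encodes the Betti numbers `dim H^i(T_n(ℝ),ℚ) = A_{2i} binom(n,2i)` of the real
toric variety of the type A Coxeter fan. -/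
theorem stmt11 (A : ℕ → ℚ)
    (hA : (PowerSeries.mk fun j => if Even j then ((-1 : ℚ)) ^ (j / 2) / (Nat.factorial j) else 0) *
          (PowerSeries.mk fun j => if Even j then A (j / 2) / (Nat.factorial j) else 0) = 1) :
    (PowerSeries.mk fun i => PowerSeries.mk fun n =>
        (-1 : ℚ) ^ i * A i * (n.choose (2 * i) : ℚ) / (Nat.factorial n)) *
      (PowerSeries.mk fun k => PowerSeries.mk fun n =>
        if n = 2 * k then (1 : ℚ) / (Nat.factorial n) else 0) =
      (PowerSeries.mk fun k =>
        if k = 0 then PowerSeries.mk (fun n => (1 : ℚ) / (Nat.factorial n)) else 0) := by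
  -- `rescale (X ^ 2) (map C f)` is the series `f(X² T)`, the outer variable being `T`.
  set sech : ℚ⟦X⟧ := mk fun i => (-1 : ℚ) ^ i * A i / (2 * i)!
  set cosh : ℚ⟦X⟧ := mk fun k => 1 / ((2 * k)! : ℚ)
  have h_left : (mk fun i => mk fun n => (-1 : ℚ) ^ i * A i * (n.choose (2 * i) : ℚ) / n !) =
      C (exp ℚ) * rescale (X ^ 2) (map C sech) := by
    ext1 i
    rw [coeff_mk, coeff_C_mul, coeff_rescale, coeff_map, coeff_mk]
    calc (mk fun n => (-1 : ℚ) ^ i * A i * (n.choose (2 * i) : ℚ) / n !)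
        = C ((-1 : ℚ) ^ i * A i) * mk fun n => (n.choose (2 * i) : ℚ) / n ! := by
          ext n; simp only [coeff_mk, coeff_C_mul, mul_div_assoc]
      _ = exp ℚ * ((X ^ 2) ^ i * C ((-1 : ℚ) ^ i * A i / (2 * i)!)) := by
          rw [mk_choose_div_factorial, ← pow_mul]
          simp only [div_eq_mul_inv, one_mul, map_mul]
          ring
  have h_right : (mk fun k => mk fun n => if n = 2 * k then (1 : ℚ) / n ! else 0) =
      rescale (X ^ 2) (map C cosh) := by
    ext1 k
    rw [coeff_mk, coeff_rescale, coeff_map, coeff_mk, ← pow_mul, mul_comm (X ^ _)]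
    ext n
    rw [coeff_C_mul_X_pow, coeff_mk]
    split_ifs with h <;> simp only [h]
  have h_exp : (mk fun k => if k = 0 then mk fun n => (1 : ℚ) / n ! else 0) = C (exp ℚ) := by
    ext1 k
    rw [coeff_mk, coeff_C]
    split_ifs
    · ext n; simp [coeff_exp]
    · rfl
  rw [h_left, h_right, h_exp, mul_assoc, ← map_mul, ← map_mul,
    mk_neg_one_pow_mul_div_mul_mk_inv_factorial A hA, map_one, map_one, mul_one]
end
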